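/- arXiv:1804.05687 — 11 statements merged into one kernel-verified Lean document; each statement's English description precedes it below -/
import Mathlib

section
/- If the semigroup action (S,X) has a global F-attractor, then (S,X) is F-eventually bounded, F-bounded dissipative, and F-asymptotically compact. -/
open Filter Set Metric Bornology Topology

universe u v

/-- A relation making the index of a net directed (reflexive, transitive, directed). -/
def DirectedLE {ι : Type*} (le : ι → ι → Prop) : Prop :=
  (∀ i, le i i) ∧ (∀ i j k, le i j → le j k → le i k) ∧ ∀ i j, ∃ k, le i k ∧ le j k

/-- Convergence of a net (indexed by `ι` with order `le`) to a filter: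
for every member `V` of the filter, eventually the net lies in `V`. -/
def NetTendsto {ι : Type*} {α : Type*} (le : ι → ι → Prop) (u : ι → α) (L : Filter α) : Prop :=
  ∀ V ∈ L, ∃ i₀, ∀ i, le i₀ i → u i ∈ V

/-- A point is a cluster point of a net, i.e. some subnet converges to it. -/
def NetClusterPt {ι : Type*} {α : Type*} [TopologicalSpace α] (le : ι → ι → Prop)
    (u : ι → α) (p : α) : Prop :=
  ∀ V ∈ nhds p, ∀ i₀, ∃ i, le i₀ i ∧ u i ∈ V

variable {S : Type u} {X : Type v}

/-- `Y` F-attracts `Z`: for every `ε > 0` there is `A ∈ F` with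
`dist (t • z, Y) < ε` for all `t ∈ A`, `z ∈ Z`. -/
def FAttracts [MetricSpace X] (φ : S → X → X) (F : Filter S) (Y Z : Set X) : Prop :=
  ∀ ε : ℝ, 0 < ε → ∃ A ∈ F, ∀ t ∈ A, ∀ z ∈ Z, Metric.infDist (φ t z) Y < ε

/-- `Y` F-absorbs `Z`: there is `A ∈ F` with `t • z ∈ Y` for all `t ∈ A`, `z ∈ Z`. -/
def FAbsorbs (φ : S → X → X) (F : Filter S) (Y Z : Set X) : Prop :=
  ∃ A ∈ F, ∀ t ∈ A, ∀ z ∈ Z, φ t z ∈ Y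

/-- `Y` is invariant: `s • Y = Y` for every `s`. -/
def SInvariant (φ : S → X → X) (Y : Set X) : Prop :=
  ∀ s : S, φ s '' Y = Y

/-- Global F-attractor: nonempty, compact, invariant, attracts every bounded set. -/
def FGlobalAttractor [MetricSpace X] (φ : S → X → X) (F : Filter S) (A : Set X) : Prop :=
  A.Nonempty ∧ IsCompact A ∧ SInvariant φ A ∧
    ∀ Z : Set X, Bornology.IsBounded Z → FAttracts φ F A Z

/-- The ω-limit set `ω(Y,F) = ⋂_{A ∈ F} closure {t • y : t ∈ A, y ∈ Y}`. -/
def omegaLim [TopologicalSpace X] (φ : S → X → X) (F : Filter S) (Y : Set X) : Set X :=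
  ⋂ A ∈ F, closure (Set.image2 φ A Y)

/-- The forward F-prolongational limit set `J(x,F)`: points `y` for which there are nets
`(t_λ)` in `S` and `(x_λ)` in `X` over a common directed set with `t_λ →_F ∞`,
`x_λ → x` and `t_λ • x_λ → y`. -/
def FJSet [TopologicalSpace X] (φ : S → X → X) (F : Filter S) (x : X) : Set X :=
  {y | ∃ (ι : Type (max u v)) (le : ι → ι → Prop) (t : ι → S) (z : ι → X),
    Nonempty ι ∧ DirectedLE le ∧ NetTendsto le t F ∧
    NetTendsto le z (nhds x) ∧ NetTendsto le (fun i => φ (t i) (z i)) (nhds y)}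

/-- F-asymptotic compactness: every net `(t_λ • x_λ)` with `(x_λ)` of bounded range
and `t_λ →_F ∞` has a cluster point (a convergent subnet). -/
def FAsympCompact [MetricSpace X] (φ : S → X → X) (F : Filter S) : Prop :=
  ∀ (ι : Type (max u v)) (le : ι → ι → Prop) (t : ι → S) (z : ι → X),
    Nonempty ι → DirectedLE le → Bornology.IsBounded (Set.range z) →
    NetTendsto le t F →
    ∃ p : X, NetClusterPt le (fun i => φ (t i) (z i)) p

/-- F-eventual boundedness: each bounded `Y` has `A ∈ F` with `A • Y` bounded. -/
def FEventuallyBounded [MetricSpace X] (φ : S → X → X) (F : Filter S) : Prop :=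
  ∀ Y : Set X, Bornology.IsBounded Y → ∃ A ∈ F, Bornology.IsBounded (Set.image2 φ A Y)

/-- F-bounded dissipativity: some bounded `D` F-absorbs every bounded subset. -/
def FBoundedDissipative [MetricSpace X] (φ : S → X → X) (F : Filter S) : Prop :=
  ∃ D : Set X, Bornology.IsBounded D ∧
    ∀ Z : Set X, Bornology.IsBounded Z → FAbsorbs φ F D Z

/-- F-point dissipativity: some bounded `D` F-absorbs every singleton. -/
def FPointDissipative [MetricSpace X] (φ : S → X → X) (F : Filter S) : Prop :=
  ∃ D : Set X, Bornology.IsBounded D ∧ ∀ x : X, FAbsorbs φ F D {x}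

/-- Eventual compactness: some `t ∈ S` maps every bounded set to a relatively compact set. -/
def FEventuallyCompact [MetricSpace X] (φ : S → X → X) : Prop :=
  ∃ t : S, ∀ Y : Set X, Bornology.IsBounded Y → IsCompact (closure (φ t '' Y))

/-- F-limit compactness: for every bounded `B` and `ε > 0` there is `A ∈ F` such that
`A • B` is covered by finitely many balls of radius `ε`. -/
def FLimitCompact [MetricSpace X] (φ : S → X → X) (F : Filter S) : Prop :=
  ∀ B : Set X, Bornology.IsBounded B → ∀ ε : ℝ, 0 < ε →
    ∃ A ∈ F, ∃ T : Set X, T.Finite ∧ Set.image2 φ A B ⊆ ⋃ c ∈ T, Metric.ball c ε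

/-- Hypothesis H₁: for all `s ∈ S`, `A ∈ F` there is `B ∈ F` with `s * B ⊆ A`. -/
def HypH1 [Mul S] (F : Filter S) : Prop :=
  ∀ s : S, ∀ A ∈ F, ∃ B ∈ F, (fun b => s * b) '' B ⊆ A

/-- Hypothesis H₃: for all `s ∈ S`, `A ∈ F` there is `B ∈ F` with `B ⊆ A * s`. -/
def HypH3 [Mul S] (F : Filter S) : Prop :=
  ∀ s : S, ∀ A ∈ F, ∃ B ∈ F, B ⊆ (fun a => a * s) '' A

/-- Hypothesis H₄: for all `s ∈ S`, `A ∈ F` there is `B ∈ F` with `B ⊆ s * A`. -/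
def HypH4 [Mul S] (F : Filter S) : Prop :=
  ∀ s : S, ∀ A ∈ F, ∃ B ∈ F, B ⊆ (fun a => s * a) '' A


private lemma finset_upper {ι : Type*} {κ : Type*} (le : ι → ι → Prop)
    (hne : Nonempty ι) (hd : DirectedLE le) (t : Finset κ) (f : κ → ι) :
    ∃ k, ∀ x ∈ t, le (f x) k := by
  classical
  induction t using Finset.induction_on with
  | empty => exact ⟨hne.some, by simp⟩
  | @insert a s hx ih =>
    obtain ⟨k, hk⟩ := ih
    obtain ⟨k', hk1, hk2⟩ := hd.2.2 (f a) k
    exact ⟨k', fun x hxm => by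
      rcases Finset.mem_insert.1 hxm with rfl | hxs
      · exact hk1
      · exact hd.2.1 _ _ _ (hk x hxs) hk2⟩

/-- existence of a global F-attractor implies F-eventual boundedness,
F-bounded dissipativity, and F-asymptotic compactness. -/
theorem global_attractor_implies_dissipativity
    {S : Type u} {X : Type v} [Semigroup S] [MetricSpace X]
    (φ : S → X → X) (F : Filter S) [Filter.NeBot F]
    (hact : ∀ (s t : S) (x : X), φ (s * t) x = φ s (φ t x))
    (hcont : ∀ s : S, Continuous (φ s))
    (A : Set X) (hA : FGlobalAttractor φ F A) :
    FEventuallyBounded φ F ∧ FBoundedDissipative φ F ∧ FAsympCompact φ F := by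
  obtain ⟨hne, hcomp, hinv, hattr⟩ := hA
  have hAb : Bornology.IsBounded A := hcomp.isBounded
  have key : ∀ Z : Set X, Bornology.IsBounded Z →
      ∃ B ∈ F, ∀ t ∈ B, ∀ z ∈ Z, φ t z ∈ Metric.thickening 1 A := by
    intro Z hZ
    obtain ⟨B, hB, h⟩ := hattr Z hZ 1 one_pos
    exact ⟨B, hB, fun t ht z hz =>
      (Metric.mem_thickening_iff_infDist_lt hne).2 (h t ht z hz)⟩
  refine ⟨?_, ?_, ?_⟩
  · intro Y hY
    obtain ⟨B, hB, h⟩ := key Y hY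
    refine ⟨B, hB, (hAb.thickening (δ := 1)).subset ?_⟩
    rintro _ ⟨t, ht, y, hy, rfl⟩
    exact h t ht y hy
  · exact ⟨Metric.thickening 1 A, hAb.thickening, fun Z hZ => key Z hZ⟩
  · intro ι le t z hι hd hbz htF
    by_contra hno
    push_neg at hno
    -- for each p ∈ A pick a neighborhood V p and index i p witnessing failure
    have hch : ∀ p ∈ A, ∃ V ∈ nhds p, ∃ i₀ : ι, ∀ i, le i₀ i → φ (t i) (z i) ∉ V := by
      intro p _
      have := hno p
      unfold NetClusterPt at this
      push_neg at this
      obtain ⟨V, hV, i₀, hi₀⟩ := this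
      exact ⟨V, hV, i₀, hi₀⟩
    choose! V hV idx hidx using hch
    -- finite subcover by interiors
    have hcov : ∀ p ∈ A, interior (V p) ∈ nhds p := fun p hp =>
      interior_mem_nhds.2 (hV p hp)
    obtain ⟨T, hTA, hTcov⟩ := hcomp.elim_nhds_subcover (fun p => interior (V p)) hcov
    have hopen : IsOpen (⋃ p ∈ T, interior (V p)) :=
      isOpen_biUnion fun _ _ => isOpen_interior
    obtain ⟨δ, hδ, hthick⟩ := hcomp.exists_thickening_subset_open hopen hTcov
    -- attraction: eventually the net lies in thickening δ A
    obtain ⟨B, hB, hBattr⟩ := hattr (Set.range z) hbz δ hδ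
    obtain ⟨i₁, hi₁⟩ := htF B hB
    -- upper bound for the finitely many witness indices, and i₁
    obtain ⟨k, hk⟩ := finset_upper le hι hd T idx
    obtain ⟨k', hk'1, hk'2⟩ := hd.2.2 i₁ k
    have hmem : φ (t k') (z k') ∈ Metric.thickening δ A :=
      (Metric.mem_thickening_iff_infDist_lt hne).2
        (hBattr (t k') (hi₁ k' hk'1) (z k') ⟨k', rfl⟩)
    obtain ⟨p, hpT, hp⟩ := Set.mem_iUnion₂.1 (hthick hmem)
    exact hidx p (hTA p hpT) k' (hd.2.1 _ _ _ (hk p hpT) hk'2) (interior_subset hp)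
end

section
/- If A is the global F-attractor for the semigroup action (S,X), then A = ⋃{ω(Y,F) : Y ⊆ X nonempty and bounded}, and moreover A = {x ∈ X : there exist nets (x_λ) in X with bounded range and (t_λ) in S over a common directed set such that t_λ →_F ∞ and t_λ•x_λ → x}. -/
open Filter Set Metric Bornology Topology

universe u v

variable {S : Type u} {X : Type v}

/-- characterization of the global F-attractor as the union of ω-limit sets of
bounded sets, and as the set of limits of nets `t_λ • x_λ` with bounded `(x_λ)` and
`t_λ →_F ∞`. -/
theorem global_attractor_characterization
    {S : Type u} {X : Type v} [Semigroup S] [MetricSpace X]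
    (φ : S → X → X) (F : Filter S) [Filter.NeBot F]
    (hact : ∀ (s t : S) (x : X), φ (s * t) x = φ s (φ t x))
    (hcont : ∀ s : S, Continuous (φ s))
    (A : Set X) (hA : FGlobalAttractor φ F A) :
    (A = ⋃ Y ∈ {Y : Set X | Y.Nonempty ∧ Bornology.IsBounded Y}, omegaLim φ F Y) ∧
    (A = {x : X | ∃ (ι : Type (max u v)) (le : ι → ι → Prop) (t : ι → S) (z : ι → X),
      Nonempty ι ∧ DirectedLE le ∧ Bornology.IsBounded (Set.range z) ∧
      NetTendsto le t F ∧ NetTendsto le (fun i => φ (t i) (z i)) (nhds x)}) := by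
  obtain ⟨hne, hcomp, hinv, hattr⟩ := hA
  have hclosed : IsClosed A := hcomp.isClosed
  have key : ∀ x : X, (∀ ε : ℝ, 0 < ε → Metric.infDist x A ≤ ε) → x ∈ A := by
    intro x h
    have h0 : Metric.infDist x A ≤ 0 :=
      le_of_forall_pos_le_add (by intro ε hε; simpa using h ε hε)
    have : Metric.infDist x A = 0 := le_antisymm h0 Metric.infDist_nonneg
    exact (hclosed.mem_iff_infDist_zero hne).2 this
  constructor
  · apply Set.Subset.antisymm
    · intro x hx
      refine Set.mem_biUnion (show A ∈ _ from ⟨hne, hcomp.isBounded⟩) ?_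
      refine Set.mem_iInter₂.mpr fun B hB => subset_closure ?_
      obtain ⟨t₀, ht₀⟩ := F.nonempty_of_mem hB
      have hx' : x ∈ φ t₀ '' A := (hinv t₀).symm ▸ hx
      obtain ⟨y, hy, hxy⟩ := hx'
      exact ⟨t₀, ht₀, y, hy, hxy⟩
    · refine Set.iUnion₂_subset fun Y hY x hx => key x fun ε hε => ?_
      obtain ⟨B, hB, hBd⟩ := hattr Y hY.2 ε hε
      have hx' : x ∈ closure (Set.image2 φ B Y) := Set.mem_iInter₂.mp hx B hB
      have hcl : closure (Set.image2 φ B Y) ⊆ {y | Metric.infDist y A ≤ ε} := by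
        apply closure_minimal
        · rintro _ ⟨t, ht, y, hy, rfl⟩
          exact (hBd t ht y hy).le
        · exact isClosed_le (Metric.continuous_infDist_pt A) continuous_const
      exact hcl hx'
  · apply Set.Subset.antisymm
    · intro x hx
      refine Set.mem_setOf.mpr ?_
      classical
      let ι : Type (max u v) := ULift.{v} {B : Set S // B ∈ F}
      let le : ι → ι → Prop := fun i j => j.down.1 ⊆ i.down.1
      have hne' : ∀ i : ι, i.down.1.Nonempty := fun i => F.nonempty_of_mem i.down.2
      let tfun : ι → S := fun i => (hne' i).choose
      have ht : ∀ i : ι, tfun i ∈ i.down.1 := fun i => (hne' i).choose_spec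
      have hx' : ∀ i : ι, ∃ a, a ∈ A ∧ φ (tfun i) a = x := by
        intro i
        have h := hinv (tfun i)
        have : x ∈ φ (tfun i) '' A := h.symm ▸ hx
        obtain ⟨a, ha, hax⟩ := this
        exact ⟨a, ha, hax⟩
      choose zfun hzA hzx using hx'
      refine ⟨ι, le, tfun, zfun, ⟨ULift.up ⟨Set.univ, F.univ_mem⟩⟩,
        ⟨fun i => Set.Subset.rfl, fun i j k hij hjk => hjk.trans hij,
          fun i j => ⟨ULift.up ⟨i.down.1 ∩ j.down.1, F.inter_mem i.down.2 j.down.2⟩,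
            Set.inter_subset_left, Set.inter_subset_right⟩⟩, ?_, ?_, ?_⟩
      · have : Set.range zfun ⊆ A := by rintro _ ⟨i, rfl⟩; exact hzA i
        exact hcomp.isBounded.subset this
      · intro V hV
        exact ⟨ULift.up ⟨V, hV⟩, fun i hi => hi (ht i)⟩
      · intro V hV
        refine ⟨ULift.up ⟨Set.univ, F.univ_mem⟩, fun i _ => ?_⟩
        show φ (tfun i) (zfun i) ∈ V
        rw [hzx i]
        exact mem_of_mem_nhds hV
    · rintro x ⟨ι, le, t, z, ⟨i⟩, ⟨hrefl, htrans, hdir⟩, hzb, htF, hconv⟩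
      refine key x fun ε hε => ?_
      obtain ⟨B, hB, hBd⟩ := hattr (Set.range z) hzb (ε / 2) (by linarith)
      obtain ⟨i₀, hi₀⟩ := htF B hB
      obtain ⟨i₁, hi₁⟩ := hconv (Metric.ball x (ε / 2)) (Metric.ball_mem_nhds x (by linarith))
      obtain ⟨k, hk₀, hk₁⟩ := hdir i₀ i₁
      have h1 : Metric.infDist (φ (t k) (z k)) A < ε / 2 :=
        hBd (t k) (hi₀ k hk₀) (z k) ⟨k, rfl⟩
      have h2 : dist (φ (t k) (z k)) x < ε / 2 := hi₁ k hk₁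
      calc Metric.infDist x A ≤ Metric.infDist (φ (t k) (z k)) A + dist x (φ (t k) (z k)) :=
            Metric.infDist_le_infDist_add_dist
        _ ≤ ε := by rw [dist_comm]; linarith
end

section
/- If A ⊆ X is the global F-attractor for the semigroup action (S,X), then A is a global uniform F-attractor: J(x,F) ≠ ∅ for every x ∈ X and J(X,F) ⊆ A. -/
open Filter Set Metric Bornology Topology

universe u v

variable {S : Type u} {X : Type v}

section Aux

/-- Finite sets of indices in a directed index type have upper bounds. -/
lemma DirectedLE.finsetUpper {ι : Type*} {le : ι → ι → Prop} (h : DirectedLE le)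
    [Nonempty ι] (s : Finset ι) : ∃ k, ∀ i ∈ s, le i k := by
  classical
  induction s using Finset.induction_on with
  | empty => exact ⟨Classical.arbitrary ι, by simp⟩
  | @insert a s _ ih =>
    obtain ⟨k, hk⟩ := ih
    obtain ⟨k', hk1, hk2⟩ := h.2.2 a k
    refine ⟨k', fun i hi => ?_⟩
    rcases Finset.mem_insert.mp hi with rfl | hi
    · exact hk1
    · exact h.2.1 _ _ _ (hk i hi) hk2

/-- A net whose infDist to a nonempty compact set tends to zero has a cluster
point in that set. -/
lemma exists_net_clusterPt {X : Type v} [MetricSpace X] {ι : Type*} {le : ι → ι → Prop}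
    (hdir : DirectedLE le) (hne : Nonempty ι) (u : ι → X) {A : Set X}
    (hAc : IsCompact A) (hAne : A.Nonempty)
    (h : ∀ ε : ℝ, 0 < ε → ∃ i₀, ∀ i, le i₀ i → Metric.infDist (u i) A < ε) :
    ∃ p ∈ A, NetClusterPt le u p := by
  classical
  by_contra hcon
  push_neg at hcon
  have key : ∀ p ∈ A, ∃ r, 0 < r ∧ ∃ i₀, ∀ i, le i₀ i → u i ∉ Metric.ball p r := by
    intro p hp
    have h1 := hcon p hp
    simp only [NetClusterPt] at h1
    push_neg at h1
    obtain ⟨V, hV, i₀, hi₀⟩ := h1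
    obtain ⟨r, hr, hball⟩ := Metric.mem_nhds_iff.mp hV
    exact ⟨r, hr, i₀, fun i hi hm => (hi₀ i hi) (hball hm)⟩
  choose! r hr i₀ hi₀ using key
  obtain ⟨T, hTA, hTcov⟩ := hAc.elim_nhds_subcover (fun p => Metric.ball p (r p / 2))
    (fun p hp => Metric.ball_mem_nhds _ (by linarith [hr p hp]))
  have hTne : T.Nonempty := by
    obtain ⟨a, ha⟩ := hAne
    obtain ⟨q, hq, -⟩ := Set.mem_iUnion₂.mp (hTcov ha)
    exact ⟨q, hq⟩
  set δ : ℝ := T.inf' hTne (fun q => r q / 2) with hδdef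
  have hδpos : 0 < δ := by
    rw [hδdef, Finset.lt_inf'_iff]
    intro q hq; linarith [hr q (hTA q hq)]
  obtain ⟨k, hk⟩ := hdir.finsetUpper (T.image (fun q => i₀ q))
  obtain ⟨j₀, hj₀⟩ := h δ hδpos
  obtain ⟨m, hm1, hm2⟩ := hdir.2.2 k j₀
  have hdist : Metric.infDist (u m) A < δ := hj₀ m hm2
  obtain ⟨a, haA, hda⟩ := (Metric.infDist_lt_iff hAne).mp hdist
  obtain ⟨q, hqT, haq⟩ := Set.mem_iUnion₂.mp (hTcov haA)
  have hball : u m ∈ Metric.ball q (r q) := by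
    have h1 : dist (u m) q ≤ dist (u m) a + dist a q := dist_triangle _ _ _
    have h2 : dist a q < r q / 2 := Metric.mem_ball.mp haq
    have h3 : δ ≤ r q / 2 := Finset.inf'_le _ hqT
    exact Metric.mem_ball.mpr (by linarith)
  have hlem : le (i₀ q) m :=
    hdir.2.1 _ _ _ (hk (i₀ q) (Finset.mem_image_of_mem _ hqT)) hm1
  exact hi₀ q (hTA q hqT) m hlem hball

/-- A cluster point of a net `φ (t i) (z i)` with `t →_F ∞` and `z → x`
belongs to `J(x,F)`. -/
lemma mem_FJSet_of_netClusterPt {S : Type u} {X : Type v} [MetricSpace X]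
    (φ : S → X → X) (F : Filter S)
    {ι : Type u} {le : ι → ι → Prop} (hdir : DirectedLE le) (hne : Nonempty ι)
    (t : ι → S) (z : ι → X) (x : X)
    (htF : NetTendsto le t F) (hzx : NetTendsto le z (nhds x))
    {p : X} (hcl : NetClusterPt le (fun i => φ (t i) (z i)) p) :
    p ∈ FJSet φ F x := by
  classical
  refine ⟨{q : ι × Set X // q.2 ∈ nhds p ∧ φ (t q.1) (z q.1) ∈ q.2},
    fun q q' => le q.1.1 q'.1.1 ∧ q'.1.2 ⊆ q.1.2,
    fun q => t q.1.1, fun q => z q.1.1,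
    ⟨⟨(Classical.arbitrary ι, Set.univ), Filter.univ_mem, Set.mem_univ _⟩⟩,
    ⟨fun q => ⟨hdir.1 _, subset_rfl⟩,
     fun q q' q'' h1 h2 => ⟨hdir.2.1 _ _ _ h1.1 h2.1, h2.2.trans h1.2⟩,
     ?_⟩, ?_, ?_, ?_⟩
  · -- directedness of the subnet index
    intro q q'
    obtain ⟨k, hk1, hk2⟩ := hdir.2.2 q.1.1 q'.1.1
    obtain ⟨i, hki, hiV⟩ := hcl (q.1.2 ∩ q'.1.2)
      (Filter.inter_mem q.2.1 q'.2.1) k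
    refine ⟨⟨(i, q.1.2 ∩ q'.1.2), Filter.inter_mem q.2.1 q'.2.1, hiV⟩,
      ⟨hdir.2.1 _ _ _ hk1 hki, Set.inter_subset_left⟩,
      ⟨hdir.2.1 _ _ _ hk2 hki, Set.inter_subset_right⟩⟩
  · -- t-subnet tends to F
    intro V hV
    obtain ⟨i₀, hi₀⟩ := htF V hV
    obtain ⟨i₁, hi₁, -⟩ := hcl Set.univ Filter.univ_mem i₀
    refine ⟨⟨(i₁, Set.univ), Filter.univ_mem, Set.mem_univ _⟩, fun q hq => ?_⟩
    exact hi₀ _ (hdir.2.1 _ _ _ hi₁ hq.1)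
  · -- z-subnet tends to x
    intro V hV
    obtain ⟨i₀, hi₀⟩ := hzx V hV
    obtain ⟨i₁, hi₁, -⟩ := hcl Set.univ Filter.univ_mem i₀
    refine ⟨⟨(i₁, Set.univ), Filter.univ_mem, Set.mem_univ _⟩, fun q hq => ?_⟩
    exact hi₀ _ (hdir.2.1 _ _ _ hi₁ hq.1)
  · -- u-subnet tends to p
    intro V hV
    obtain ⟨i, -, hiV⟩ := hcl V hV (Classical.arbitrary ι)
    exact ⟨⟨(i, V), hV, hiV⟩, fun q hq => hq.2 q.2.2⟩

end Aux

/-- the global F-attractor is a global uniform F-attractor: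
`J(x,F) ≠ ∅` for every `x` and `J(X,F) ⊆ A`. -/


theorem global_attractor_is_uniform
    {S : Type u} {X : Type v} [Semigroup S] [MetricSpace X]
    (φ : S → X → X) (F : Filter S) [Filter.NeBot F]
    (hact : ∀ (s t : S) (x : X), φ (s * t) x = φ s (φ t x))
    (hcont : ∀ s : S, Continuous (φ s))
    (A : Set X) (hA : FGlobalAttractor φ F A) :
    (∀ x : X, (FJSet φ F x).Nonempty) ∧ (⋃ x : X, FJSet φ F x) ⊆ A := by
  obtain ⟨hAne, hAc, hAinv, hAattr⟩ := hA
  constructor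
  · -- J(x,F) is nonempty for every x
    intro x
    have hatt : FAttracts φ F A {x} := hAattr {x} Bornology.isBounded_singleton
    -- index type: pairs (B, ε) with B ∈ F, ε > 0 and infDist (φ s x) A < ε on B
    set ι : Type u :=
      {q : Set S × ℝ // q.1 ∈ F ∧ 0 < q.2 ∧ ∀ s ∈ q.1, Metric.infDist (φ s x) A < q.2}
      with hιdef
    set le : ι → ι → Prop := fun i j => j.1.1 ⊆ i.1.1 ∧ j.1.2 ≤ i.1.2 with hledef
    have mk : ∀ ε : ℝ, 0 < ε → ∀ B ∈ F,
        ∃ i : ι, i.1.1 ⊆ B ∧ i.1.2 ≤ ε := by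
      intro ε hε B hB
      obtain ⟨C, hCF, hC⟩ := hatt ε hε
      refine ⟨⟨(B ∩ C, ε), Filter.inter_mem hB hCF, hε, fun s hs => ?_⟩,
        Set.inter_subset_left, le_refl _⟩
      exact hC s hs.2 x rfl
    obtain ⟨i₀, -, -⟩ := mk 1 one_pos Set.univ Filter.univ_mem
    have hne : Nonempty ι := ⟨i₀⟩
    have hdir : DirectedLE le := by
      refine ⟨fun i => ⟨subset_rfl, le_refl _⟩,
        fun i j k h1 h2 => ⟨h2.1.trans h1.1, h2.2.trans h1.2⟩, fun i j => ?_⟩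
      obtain ⟨k, hkB, hkε⟩ := mk (min i.1.2 j.1.2)
        (lt_min i.2.2.1 j.2.2.1) (i.1.1 ∩ j.1.1) (Filter.inter_mem i.2.1 j.2.1)
      exact ⟨k, ⟨hkB.trans Set.inter_subset_left, hkε.trans (min_le_left _ _)⟩,
        ⟨hkB.trans Set.inter_subset_right, hkε.trans (min_le_right _ _)⟩⟩
    set t : ι → S := fun i => (Filter.nonempty_of_mem i.2.1).choose with htdef
    have htmem : ∀ i : ι, t i ∈ i.1.1 := fun i => (Filter.nonempty_of_mem i.2.1).choose_spec
    have htF : NetTendsto le t F := by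
      intro V hV
      obtain ⟨j, hjB, -⟩ := mk 1 one_pos V hV
      exact ⟨j, fun i hi => hjB (hi.1 (htmem i))⟩
    have hinf : ∀ ε : ℝ, 0 < ε → ∃ j : ι, ∀ i, le j i →
        Metric.infDist (φ (t i) x) A < ε := by
      intro ε hε
      obtain ⟨j, -, hjε⟩ := mk ε hε Set.univ Filter.univ_mem
      exact ⟨j, fun i hi =>
        lt_of_lt_of_le (i.2.2.2 (t i) (htmem i)) (hi.2.trans hjε)⟩
    obtain ⟨p, hpA, hcl⟩ := exists_net_clusterPt hdir hne
      (fun i => φ (t i) x) hAc hAne hinf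
    have hzx : NetTendsto le (fun _ : ι => x) (nhds x) :=
      fun V hV => ⟨i₀, fun i _ => mem_of_mem_nhds hV⟩
    exact ⟨p, mem_FJSet_of_netClusterPt φ F hdir hne t (fun _ => x) x htF hzx hcl⟩
  · -- J(X,F) ⊆ A
    intro y hy
    obtain ⟨x, hyx⟩ := Set.mem_iUnion.mp hy
    obtain ⟨ι, le, t, z, hne, hdir, htF, hzx, huy⟩ := hyx
    have hball : Bornology.IsBounded (Metric.ball x 1) := Metric.isBounded_ball
    have hatt : FAttracts φ F A (Metric.ball x 1) := hAattr _ hball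
    have key : ∀ ε : ℝ, 0 < ε → Metric.infDist y A < 2 * ε := by
      intro ε hε
      obtain ⟨C, hCF, hC⟩ := hatt ε hε
      obtain ⟨i₁, hi₁⟩ := hzx (Metric.ball x 1) (Metric.ball_mem_nhds _ one_pos)
      obtain ⟨i₂, hi₂⟩ := htF C hCF
      obtain ⟨i₃, hi₃⟩ := huy (Metric.ball y ε) (Metric.ball_mem_nhds _ hε)
      obtain ⟨j, hj1, hj2⟩ := hdir.2.2 i₁ i₂
      obtain ⟨i, hji, hi3i⟩ := hdir.2.2 j i₃
      have h1 : z i ∈ Metric.ball x 1 := hi₁ i (hdir.2.1 _ _ _ hj1 hji)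
      have h2 : t i ∈ C := hi₂ i (hdir.2.1 _ _ _ hj2 hji)
      have h3 : dist (φ (t i) (z i)) y < ε := Metric.mem_ball.mp (hi₃ i hi3i)
      have h4 : Metric.infDist (φ (t i) (z i)) A < ε := hC _ h2 _ h1
      calc Metric.infDist y A
          ≤ Metric.infDist (φ (t i) (z i)) A + dist y (φ (t i) (z i)) :=
            Metric.infDist_le_infDist_add_dist
        _ < 2 * ε := by rw [dist_comm]; linarith
    have h0 : Metric.infDist y A = 0 := by
      by_contra h
      have hpos : 0 < Metric.infDist y A :=
        lt_of_le_of_ne Metric.infDist_nonneg (Ne.symm h)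
      have := key (Metric.infDist y A / 2) (by linarith)
      linarith
    exact (hAc.isClosed.mem_iff_infDist_zero hAne).mpr h0
end

section
/- Assume F satisfies hypothesis H3 and the semigroup action (S,X) is eventually compact and F-asymptotically compact. If A ⊆ X is a nonempty compact invariant set with J(x,F) ≠ ∅ for every x ∈ X and J(X,F) ⊆ A, then A F-attracts every bounded subset of X; hence A is the global F-attractor for (S,X). -/
open Filter Set Metric Bornology Topology

universe u v

variable {S : Type u} {X : Type v}

/-!
If a bounded set `Z` were not attracted by `A`, there would be `ε > 0` and points `t • z`,
with `t` arbitrarily far out along `F` and `z ∈ Z`, at distance at least `ε` from `A`. By H₃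
these times can be taken of the form `a * t₀`, where `t₀` is the time of eventual compactness,
so `t • z = a • (t₀ • z)` with `t₀ • z` in the compact set `closure (t₀ • Z)`. Passing to a
subnet, `t₀ • z → x`, and by asymptotic compactness `a • (t₀ • z) → y` along a further subnet.
Then `y ∈ J(x, F) ⊆ A`, although `y` stays at distance at least `ε` from `A`.
-/

namespace Filter

variable {α β : Type*} (G : Filter α)

/-- Pairs `a ∈ s ∈ G`, directed by reverse inclusion of `s`: the net `pt` along this index has
tail filter `G`, which lets the net-based definitions be checked with filters. -/
def NetIndex : Type _ := {q : α × Set α // q.2 ∈ G ∧ q.1 ∈ q.2}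

variable {G}

namespace NetIndex

def le (q q' : G.NetIndex) : Prop := q'.1.2 ⊆ q.1.2

def pt (q : G.NetIndex) : α := q.1.1

variable [G.NeBot]

noncomputable def ofMem {s : Set α} (hs : s ∈ G) : G.NetIndex :=
  ⟨((nonempty_of_mem hs).some, s), hs, (nonempty_of_mem hs).some_mem⟩

instance : Nonempty G.NetIndex := ⟨ofMem univ_mem⟩

theorem directedLE_le : DirectedLE (le (G := G)) :=
  ⟨fun _ => subset_rfl, fun _ _ _ h h' => h'.trans h,
    fun q q' => ⟨ofMem (inter_mem q.2.1 q'.2.1), inter_subset_left, inter_subset_right⟩⟩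

theorem netTendsto_of_tendsto {u : α → β} {L : Filter β} (h : Tendsto u G L) :
    NetTendsto (le (G := G)) (u ∘ pt) L :=
  fun _ hV => ⟨ofMem (h hV), fun q hq => hq q.2.2⟩

theorem mapClusterPt_of_netClusterPt [TopologicalSpace β] {u : α → β} {p : β}
    (h : NetClusterPt (le (G := G)) (u ∘ pt) p) : MapClusterPt p G u := by
  refine mapClusterPt_iff_frequently.2 fun V hV => frequently_iff.2 fun hW => ?_
  obtain ⟨q, hq, hqV⟩ := h V hV (ofMem hW)
  exact ⟨q.pt, hq q.2.2, hqV⟩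

end NetIndex

end Filter

open Filter.NetIndex

section Action

variable {φ : S → X → X} {F : Filter S}

theorem mem_FJSet_of_tendsto [TopologicalSpace X] {α : Type (max u v)} {G : Filter α} [G.NeBot]
    {a : α → S} {w : α → X} {x y : X} (ha : Tendsto a G F) (hw : Tendsto w G (𝓝 x))
    (hy : Tendsto (fun i => φ (a i) (w i)) G (𝓝 y)) : y ∈ FJSet φ F x :=
  ⟨G.NetIndex, le, a ∘ pt, w ∘ pt, inferInstance, directedLE_le,
    netTendsto_of_tendsto ha, netTendsto_of_tendsto hw, netTendsto_of_tendsto hy⟩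

variable [MetricSpace X]

theorem FAsympCompact.exists_mapClusterPt (hac : FAsympCompact φ F) {α : Type (max u v)}
    {G : Filter α} [G.NeBot] {a : α → S} {w : α → X} (ha : Tendsto a G F)
    (hw : IsBounded (range w)) : ∃ p, MapClusterPt p G (fun i => φ (a i) (w i)) :=
  let ⟨p, hp⟩ := hac _ le (a ∘ pt) (w ∘ pt) inferInstance directedLE_le
    (hw.subset (range_comp_subset_range _ _)) (netTendsto_of_tendsto ha)
  ⟨p, mapClusterPt_of_netClusterPt hp⟩

theorem FAsympCompact.exists_mem_FJSet_mapClusterPt (hac : FAsympCompact φ F)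
    {α : Type (max u v)} {G : Filter α} {a : α → S} {w : α → X} {x : X} (ha : Tendsto a G F)
    (hw : IsBounded (range w)) (hx : MapClusterPt x G w) :
    ∃ y ∈ FJSet φ F x, MapClusterPt y G (fun i => φ (a i) (w i)) := by
  obtain ⟨U, hUG, hwU⟩ := mapClusterPt_iff_ultrafilter.1 hx
  obtain ⟨y, hy⟩ := hac.exists_mapClusterPt (ha.mono_left hUG) hw
  obtain ⟨V, hVU, hyV⟩ := mapClusterPt_iff_ultrafilter.1 hy
  exact ⟨y, mem_FJSet_of_tendsto (ha.mono_left (hVU.trans hUG)) (hwU.mono_left hVU) hyV,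
    mapClusterPt_iff_ultrafilter.2 ⟨V, hVU.trans hUG, hyV⟩⟩

theorem HypH3.frequently_mul_right [Mul S] (h3 : HypH3 F) (s : S) {P : S → Prop}
    (hP : ∃ᶠ t in F, P t) : ∃ᶠ a in F, P (a * s) := by
  refine frequently_iff.2 fun {B} hB => ?_
  obtain ⟨B', hB', hB'B⟩ := h3 s B hB
  obtain ⟨t, ⟨-, ht⟩, hPt⟩ := frequently_iff.1 hP (inter_mem hB hB')
  obtain ⟨a, haB, rfl⟩ := hB'B ht
  exact ⟨a, haB, hPt⟩

theorem FAttracts.of_iUnion_FJSet_subset [Mul S]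
    (hact : ∀ (s t : S) (x : X), φ (s * t) x = φ s (φ t x))
    (h3 : HypH3 F) (hec : FEventuallyCompact φ) (hac : FAsympCompact φ F) {A : Set X}
    (hJ : (⋃ x : X, FJSet φ F x) ⊆ A) {Z : Set X} (hZ : IsBounded Z) : FAttracts φ F A Z := by
  obtain ⟨t₀, ht₀⟩ := hec
  by_contra hnot
  unfold FAttracts at hnot
  push Not at hnot
  obtain ⟨ε, hε, hfar⟩ := hnot
  have hfar' : ∃ᶠ a in F, ∃ z ∈ Z, ε ≤ infDist (φ (a * t₀) z) A :=
    h3.frequently_mul_right t₀ (frequently_iff.2 fun {B} hB => hfar B hB)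
  let Far : Set (S × X) := {q | q.2 ∈ Z ∧ ε ≤ infDist (φ (q.1 * t₀) q.2) A}
  let G : Filter Far := comap (fun q => q.1.1) F
  have : G.NeBot := comap_neBot_iff_frequently.2 <|
    hfar'.mono fun a ⟨z, hz, h⟩ => ⟨⟨(a, z), hz, h⟩, rfl⟩
  let w : Far → X := fun q => φ t₀ q.1.2
  have hwK : range w ⊆ closure (φ t₀ '' Z) :=
    range_subset_iff.2 fun q => subset_closure (mem_image_of_mem _ q.2.1)
  obtain ⟨x, -, hx⟩ := (ht₀ Z hZ).exists_mapClusterPt (f := G)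
    (tendsto_principal.2 (.of_forall fun q => hwK ⟨q, rfl⟩))
  obtain ⟨y, hyJ, hy⟩ :=
    hac.exists_mem_FJSet_mapClusterPt tendsto_comap ((ht₀ Z hZ).isBounded.subset hwK) hx
  have hyfar : ε ≤ infDist y A :=
    (isClosed_le continuous_const (continuous_infDist_pt A)).mem_of_mapClusterPt hy
      (.of_forall fun q => by simpa only [w, ← hact, mem_ofPred_eq] using q.2.2)
  rw [infDist_zero_of_mem (hJ (mem_iUnion.2 ⟨x, hyJ⟩))] at hyfar
  exact hε.not_ge hyfar

end Action

theorem uniform_attractor_is_global_attractor_general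
    {S : Type u} {X : Type v} [Semigroup S] [MetricSpace X]
    (φ : S → X → X) (F : Filter S)
    (hact : ∀ (s t : S) (x : X), φ (s * t) x = φ s (φ t x))
    (h3 : HypH3 F) (hec : FEventuallyCompact φ) (hac : FAsympCompact φ F)
    (A : Set X) (hne : A.Nonempty) (hcpt : IsCompact A) (hinv : SInvariant φ A)
    (hJsub : (⋃ x : X, FJSet φ F x) ⊆ A) :
    (∀ Z : Set X, Bornology.IsBounded Z → FAttracts φ F A Z) ∧
      FGlobalAttractor φ F A := by
  have hattr : ∀ Z : Set X, IsBounded Z → FAttracts φ F A Z :=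
    fun _ hZ => .of_iUnion_FJSet_subset hact h3 hec hac hJsub hZ
  exact ⟨hattr, hne, hcpt, hinv, hattr⟩

/-- under H₃, eventual compactness and F-asymptotic compactness, a global
uniform F-attractor attracts every bounded set, hence is the global F-attractor. -/
theorem uniform_attractor_is_global_attractor
    {S : Type u} {X : Type v} [Semigroup S] [MetricSpace X]
    (φ : S → X → X) (F : Filter S) [Filter.NeBot F]
    (hact : ∀ (s t : S) (x : X), φ (s * t) x = φ s (φ t x))
    (hcont : ∀ s : S, Continuous (φ s))
    (h3 : HypH3 F) (hec : FEventuallyCompact φ) (hac : FAsympCompact φ F)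
    (A : Set X) (hne : A.Nonempty) (hcpt : IsCompact A) (hinv : SInvariant φ A)
    (hJne : ∀ x : X, (FJSet φ F x).Nonempty)
    (hJsub : (⋃ x : X, FJSet φ F x) ⊆ A) :
    (∀ Z : Set X, Bornology.IsBounded Z → FAttracts φ F A Z) ∧
      FGlobalAttractor φ F A :=
  uniform_attractor_is_global_attractor_general φ F hact h3 hec hac A hne hcpt hinv hJsub
end

section
/- Assume F satisfies hypotheses H3 and H4 and the semigroup action (S,X) is F-eventually bounded and eventually compact. Let A ⊆ X be a nonempty compact invariant set. Then A is the global F-attractor for (S,X) if and only if A is a global uniform F-attractor for (S,X), i.e., J(x,F) ≠ ∅ for every x ∈ X and J(X,F) ⊆ A. -/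
open Filter Set Metric Bornology Topology

universe u v

variable {S : Type u} {X : Type v}

/-! The prolongational limit set `J(x, F)` is the set of cluster points of `(t, z) ↦ t • z` along
`F ×ˢ 𝓝 x`, and `A` F-attracts `Z` iff `(t, z) ↦ t • z` tends to `𝓝ˢ A` along `F ×ˢ 𝓟 Z`
(for compact `A`). If `A` attracts bounded sets, it attracts the ball `closedBall x 1`, so by
compactness `J(x, F)` is nonempty and contained in `A`. Conversely, let `s` be the element given
by eventual compactness. H₃ and H₄ write a divergent `t` as `s * c * s` with `c` divergent; for
`z` in a bounded set, `s • z` then stays in a compact set, and by eventual boundedness so does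
`t • z = s • (c • (s • z))`. Hence along every ultrafilter of pairs `(t, z)`, `t • z` converges to a
point of some `J(x, F)`: `J(X, F)` attracts bounded sets, and so does `A ⊇ J(X, F)`. -/

open Function (uncurry)

universe w

def netFilter {ι : Type*} (le : ι → ι → Prop) : Filter ι :=
  ⨅ i, 𝓟 {j | le i j}

section Nets

variable {ι α : Type*} {le : ι → ι → Prop}

theorem DirectedLE.hasBasis_netFilter [Nonempty ι] (h : DirectedLE le) :
    (netFilter le).HasBasis (fun _ => True) fun i => {j | le i j} :=
  hasBasis_iInf_principal fun i i' =>
    let ⟨k, hik, hi'k⟩ := h.2.2 i i'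
    ⟨k, fun _ hj => h.2.1 _ _ _ hik hj, fun _ hj => h.2.1 _ _ _ hi'k hj⟩

theorem DirectedLE.netFilter_neBot [Nonempty ι] (h : DirectedLE le) : NeBot (netFilter le) :=
  h.hasBasis_netFilter.neBot_iff.2 fun {i} _ => ⟨i, h.1 i⟩

theorem DirectedLE.netTendsto_iff [Nonempty ι] (h : DirectedLE le) {u : ι → α} {L : Filter α} :
    NetTendsto le u L ↔ Tendsto u (netFilter le) L := by
  simp [h.hasBasis_netFilter.tendsto_left_iff, NetTendsto, MapsTo]

theorem Filter.exists_net_tendsto {α : Type w} (G : Filter α) [NeBot G] :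
    ∃ (ι : Type w) (le : ι → ι → Prop) (e : ι → α),
      Nonempty ι ∧ DirectedLE le ∧ Tendsto e (netFilter le) G := by
  let ι := {p : Set α × α // p.1 ∈ G ∧ p.2 ∈ p.1}
  let le : ι → ι → Prop := fun i j => j.1.1 ⊆ i.1.1
  have point : ∀ V ∈ G, ∃ i : ι, i.1.1 = V := fun V hV =>
    let ⟨a, ha⟩ := nonempty_of_mem hV
    ⟨⟨(V, a), hV, ha⟩, rfl⟩
  have hι : Nonempty ι := let ⟨i, _⟩ := point univ univ_mem; ⟨i⟩
  have hdir : DirectedLE le := by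
    refine ⟨fun _ => subset_rfl, fun _ _ _ hij hjk => hjk.trans hij, fun i j => ?_⟩
    obtain ⟨k, hk⟩ := point _ (inter_mem i.2.1 j.2.1)
    exact ⟨k, hk.trans_subset inter_subset_left, hk.trans_subset inter_subset_right⟩
  refine ⟨ι, le, fun i => i.1.2, hι, hdir, hdir.netTendsto_iff.1 fun V hV => ?_⟩
  obtain ⟨i₀, rfl⟩ := point V hV
  exact ⟨i₀, fun i hi => hi i.2.2⟩

end Nets

theorem mem_FJSet_iff {S : Type u} {X : Type v} [TopologicalSpace X] {φ : S → X → X}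
    {F : Filter S} {x y : X} :
    y ∈ FJSet φ F x ↔ MapClusterPt y (F ×ˢ 𝓝 x) (uncurry φ) := by
  constructor
  · rintro ⟨ι, le, t, z, hι, hdir, ht, hz, hy⟩
    rw [hdir.netTendsto_iff] at ht hz hy
    have := hdir.netFilter_neBot
    exact (hy.mapClusterPt (u := uncurry φ ∘ fun i => (t i, z i))).of_comp (ht.prodMk hz)
  · intro h
    obtain ⟨U, hU, hUy⟩ := mapClusterPt_iff_ultrafilter.1 h
    obtain ⟨ι, le, e, hι, hdir, he⟩ := (U : Filter (S × X)).exists_net_tendsto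
    have he' := he.mono_right hU
    exact ⟨ι, le, fun i => (e i).1, fun i => (e i).2, hι, hdir,
      hdir.netTendsto_iff.2 (tendsto_fst.comp he'), hdir.netTendsto_iff.2 (tendsto_snd.comp he'),
      hdir.netTendsto_iff.2 (hUy.comp he)⟩

theorem IsCompact.exists_mapClusterPt_of_tendsto_nhdsSet {α X : Type*} [TopologicalSpace X]
    {K : Set X} (hK : IsCompact K) {l : Filter α} [NeBot l] {u : α → X}
    (hu : Tendsto u l (𝓝ˢ K)) : ∃ y ∈ K, MapClusterPt y l u := by
  by_contra! h
  have hdisj : Disjoint (𝓝ˢ K) (map u l) :=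
    hK.disjoint_nhdsSet_left.2 fun y hy => disjoint_iff.2 (not_neBot.1 (h y hy))
  exact (map_neBot (m := u)).ne (hdisj.eq_bot_of_ge hu)

theorem MapClusterPt.mem_closure_of_tendsto_nhdsSet {α X : Type*} [TopologicalSpace X]
    [RegularSpace X] {K : Set X} {l : Filter α} {u : α → X} {y : X} (h : MapClusterPt y l u)
    (hu : Tendsto u l (𝓝ˢ K)) : y ∈ closure K := by
  by_contra hy
  exact (h.clusterPt.mono hu).ne (disjoint_iff.1 (disjoint_nhdsSet_nhds.2 hy).symm)

theorem fAttracts_iff_tendsto_nhdsSet {S : Type u} {X : Type v} [MetricSpace X]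
    {φ : S → X → X} {F : Filter S} {A Z : Set X} (hA : IsCompact A) (hne : A.Nonempty) :
    FAttracts φ F A Z ↔ Tendsto (uncurry φ) (F ×ˢ 𝓟 Z) (𝓝ˢ A) := by
  rw [Metric.tendsto_nhdsSet hA hne]
  refine forall₂_congr fun ε _ => ?_
  rw [Filter.Eventually, mem_prod_principal, ← exists_mem_subset_iff]
  rfl

section CompactAction

variable {S : Type u} {X : Type v} [Semigroup S] [MetricSpace X] {φ : S → X → X} {F : Filter S}

theorem HypH3.le_map_mul_right (h : HypH3 F) (s : S) :
    F ≤ map (· * s) F :=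
  le_map fun A hA => let ⟨_, hB, hBA⟩ := h s A hA; mem_of_superset hB hBA

theorem HypH4.le_map_mul_left (h : HypH4 F) (s : S) :
    F ≤ map (s * ·) F :=
  le_map fun A hA => let ⟨_, hB, hBA⟩ := h s A hA; mem_of_superset hB hBA

theorem exists_mapClusterPt_mem_FJSet (hact : ∀ (s t : S) (x : X), φ (s * t) x = φ s (φ t x))
    (h3 : HypH3 F) (h4 : HypH4 F) (heb : FEventuallyBounded φ F) (hec : FEventuallyCompact φ)
    {Z : Set X} (hZ : IsBounded Z) (G : Filter (S × X)) [NeBot G] (hG : G ≤ F ×ˢ 𝓟 Z) :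
    ∃ x, ∃ y ∈ FJSet φ F x, MapClusterPt y G (uncurry φ) := by
  obtain ⟨s, hs⟩ := hec
  let g : S × X → S × X := fun q => (q.1 * s, q.2)
  -- H3 writes `t = a * s` with `a →_F ∞`; then `t • z = a • w` with `w = s • z` relatively compact.
  have hFZ : F ×ˢ 𝓟 Z ≤ map g (F ×ˢ 𝓟 Z) := by
    calc F ×ˢ 𝓟 Z ≤ map (· * s) F ×ˢ map id (𝓟 Z) := prod_mono (h3.le_map_mul_right s) map_id.ge
      _ = map g (F ×ˢ 𝓟 Z) := prod_map_map_eq' _ _ _ _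
  have : NeBot (comap g G ⊓ F ×ˢ 𝓟 Z) := by
    rw [neBot_inf_comap_iff_map', inf_eq_left.2 (hG.trans hFZ)]
    infer_instance
  have hZ_ev : ∀ᶠ q in comap g G ⊓ F ×ˢ 𝓟 Z, q.2 ∈ Z :=
    (tendsto_snd.eventually_mem (mem_principal_self Z)).filter_mono inf_le_right
  obtain ⟨x, -, hx⟩ := (hs Z hZ).exists_mapClusterPt (u := fun q : S × X => φ s q.2)
    (tendsto_principal.2 (hZ_ev.mono fun q hq => subset_closure (mem_image_of_mem _ hq)))
  obtain ⟨U, hUle, hUx⟩ := mapClusterPt_iff_ultrafilter.1 hx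
  -- H4 writes `a = s * c` with `c ∈ C`, where `C • closure (s • Z)` is bounded; so
  -- `a • w = s • (c • w)` is relatively compact.
  obtain ⟨C, hC, hCb⟩ := heb _ (hs Z hZ).isBounded
  have hK : ∀ᶠ q in (U : Filter (S × X)),
      φ q.1 (φ s q.2) ∈ closure (φ s '' image2 φ C (closure (φ s '' Z))) := by
    have hsC := (tendsto_fst.eventually_mem (h4.le_map_mul_left s (image_mem_map hC))).filter_mono
      (hUle.trans inf_le_right)
    filter_upwards [hsC, hZ_ev.filter_mono hUle] with ⟨a, z⟩ ⟨c, hc, hca⟩ hz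
    dsimp only at hca hz ⊢
    rw [← hca, hact]
    exact subset_closure (mem_image_of_mem _ (mem_image2_of_mem hc (subset_closure ⟨z, hz, rfl⟩)))
  obtain ⟨y, -, hy⟩ := (hs _ hCb).exists_mapClusterPt (tendsto_principal.2 hK)
  have hyU : Tendsto (fun q : S × X => φ q.1 (φ s q.2)) U (𝓝 y) :=
    (Ultrafilter.clusterPt_iff (f := U.map _)).1 hy
  refine ⟨x, y, mem_FJSet_iff.2 ?_, ?_⟩
  · refine (hyU.mapClusterPt (u := uncurry φ ∘ fun q : S × X => (q.1, φ s q.2))).of_comp ?_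
    exact (tendsto_fst.mono_left (hUle.trans inf_le_right)).prodMk hUx
  · have hgU : Tendsto g U G := (map_mono (hUle.trans inf_le_left)).trans map_comap_le
    refine (Tendsto.mapClusterPt (u := uncurry φ ∘ g) ?_).of_comp hgU
    simpa [g, Function.comp_def, hact] using hyU

theorem tendsto_nhdsSet_iUnion_FJSet (hact : ∀ (s t : S) (x : X), φ (s * t) x = φ s (φ t x))
    (h3 : HypH3 F) (h4 : HypH4 F) (heb : FEventuallyBounded φ F) (hec : FEventuallyCompact φ)
    {Z : Set X} (hZ : IsBounded Z) :
    Tendsto (uncurry φ) (F ×ˢ 𝓟 Z) (𝓝ˢ (⋃ x, FJSet φ F x)) := by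
  rw [tendsto_iff_ultrafilter]
  intro U hU
  obtain ⟨x, y, hy, hUy⟩ := exists_mapClusterPt_mem_FJSet hact h3 h4 heb hec hZ U hU
  have hmap : ClusterPt y (Ultrafilter.map (uncurry φ) U) := hUy
  exact (Ultrafilter.clusterPt_iff.1 hmap).trans (nhds_le_nhdsSet (mem_iUnion.2 ⟨x, hy⟩))

end CompactAction

theorem global_attractor_iff_uniform_general
    {S : Type u} {X : Type v} [Semigroup S] [MetricSpace X]
    (φ : S → X → X) (F : Filter S) [Filter.NeBot F]
    (hact : ∀ (s t : S) (x : X), φ (s * t) x = φ s (φ t x))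
    (h3 : HypH3 F) (h4 : HypH4 F)
    (heb : FEventuallyBounded φ F) (hec : FEventuallyCompact φ)
    (A : Set X) (hne : A.Nonempty) (hcpt : IsCompact A) (hinv : SInvariant φ A) :
    FGlobalAttractor φ F A ↔
      ((∀ x : X, (FJSet φ F x).Nonempty) ∧ (⋃ x : X, FJSet φ F x) ⊆ A) := by
  have hattr (Z : Set X) := fAttracts_iff_tendsto_nhdsSet (φ := φ) (F := F) (Z := Z) hcpt hne
  constructor
  · rintro ⟨-, -, -, hatt⟩
    refine ⟨fun x => ?_, iUnion_subset fun x y hy => ?_⟩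
    · have htend := (hattr {x}).1 (hatt {x} isBounded_singleton)
      rw [principal_singleton] at htend
      obtain ⟨y, -, hy⟩ := hcpt.exists_mapClusterPt_of_tendsto_nhdsSet htend
      exact ⟨y, mem_FJSet_iff.2 (hy.mono (prod_mono le_rfl (pure_le_nhds x)))⟩
    · have hball : 𝓝 x ≤ 𝓟 (closedBall x 1) := le_principal_iff.2 (closedBall_mem_nhds x one_pos)
      have htend := ((hattr _).1 (hatt _ isBounded_closedBall)).mono_left (prod_mono le_rfl hball)
      exact hcpt.isClosed.closure_subset
        ((mem_FJSet_iff.1 hy).mem_closure_of_tendsto_nhdsSet htend)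
  · rintro ⟨-, hJA⟩
    refine ⟨hne, hcpt, hinv, fun Z hZ => (hattr Z).2 ?_⟩
    exact (tendsto_nhdsSet_iUnion_FJSet hact h3 h4 heb hec hZ).mono_right (nhdsSet_mono hJA)

/-- under H₃, H₄, F-eventual boundedness and eventual compactness, a nonempty
compact invariant set is the global F-attractor iff it is a global uniform F-attractor. -/
theorem global_attractor_iff_uniform
    {S : Type u} {X : Type v} [Semigroup S] [MetricSpace X]
    (φ : S → X → X) (F : Filter S) [Filter.NeBot F]
    (hact : ∀ (s t : S) (x : X), φ (s * t) x = φ s (φ t x))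
    (hcont : ∀ s : S, Continuous (φ s))
    (h3 : HypH3 F) (h4 : HypH4 F)
    (heb : FEventuallyBounded φ F) (hec : FEventuallyCompact φ)
    (A : Set X) (hne : A.Nonempty) (hcpt : IsCompact A) (hinv : SInvariant φ A) :
    FGlobalAttractor φ F A ↔
      ((∀ x : X, (FJSet φ F x).Nonempty) ∧ (⋃ x : X, FJSet φ F x) ⊆ A) :=
  global_attractor_iff_uniform_general φ F hact h3 h4 heb hec A hne hcpt hinv
end

section
/- If the semigroup action (S,X) is F-asymptotically compact, then it is F-limit compact. -/
open Filter Set Metric Bornology Topology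

universe u v

variable {S : Type u} {X : Type v}

/-- F-asymptotic compactness implies F-limit compactness. -/
theorem asympCompact_implies_limitCompact
    {S : Type u} {X : Type v} [Semigroup S] [MetricSpace X]
    (φ : S → X → X) (F : Filter S) [Filter.NeBot F]
    (hact : ∀ (s t : S) (x : X), φ (s * t) x = φ s (φ t x))
    (hcont : ∀ s : S, Continuous (φ s))
    (hac : FAsympCompact φ F) :
    FLimitCompact φ F := by
  classical
  intro B hB ε hε
  by_contra hcon
  push_neg at hcon
  -- hcon : ∀ A ∈ F, ∀ T, T.Finite → ¬ image2 φ A B ⊆ ⋃ c ∈ T, ball c ε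
  set ι : Type (max u v) := {p : Set S × Set (S × X) // p.1 ∈ F ∧ p.2.Finite} with hι
  let le : ι → ι → Prop := fun i j => j.1.1 ⊆ i.1.1 ∧ i.1.2 ⊆ j.1.2
  have hne : Nonempty ι := ⟨⟨(Set.univ, ∅), Filter.univ_mem, Set.finite_empty⟩⟩
  have hdir : DirectedLE le := by
    refine ⟨fun i => ⟨subset_rfl, subset_rfl⟩,
      fun i j k hij hjk => ⟨hjk.1.trans hij.1, hij.2.trans hjk.2⟩, fun i j => ?_⟩
    exact ⟨⟨(i.1.1 ∩ j.1.1, i.1.2 ∪ j.1.2),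
      Filter.inter_mem i.2.1 j.2.1, i.2.2.union j.2.2⟩,
      ⟨Set.inter_subset_left, Set.subset_union_left⟩,
      ⟨Set.inter_subset_right, Set.subset_union_right⟩⟩
  -- choose for each index a pair (t, x) with value ε-away from the finite set
  have hsel : ∀ i : ι, ∃ q : S × X, q.1 ∈ i.1.1 ∧ q.2 ∈ B ∧
      ∀ r ∈ i.1.2, ε ≤ dist (φ q.1 q.2) (φ r.1 r.2) := by
    intro i
    have h := hcon i.1.1 i.2.1 ((fun r : S × X => φ r.1 r.2) '' i.1.2)
      (i.2.2.image _)
    rw [Set.not_subset] at h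
    obtain ⟨y, hy, hy2⟩ := h
    obtain ⟨t, ht, x, hx, rfl⟩ := hy
    refine ⟨(t, x), ht, hx, fun r hr => ?_⟩
    by_contra hlt
    push_neg at hlt
    exact hy2 (Set.mem_biUnion (Set.mem_image_of_mem _ hr) (by simpa [dist_comm] using hlt))
  choose sel hsel1 hsel2 hsel3 using hsel
  let t : ι → S := fun i => (sel i).1
  let z : ι → X := fun i => (sel i).2
  have hzb : Bornology.IsBounded (Set.range z) :=
    hB.subset (Set.range_subset_iff.mpr fun i => hsel2 i)
  have htF : NetTendsto le t F := by
    intro V hV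
    refine ⟨⟨(V, ∅), hV, Set.finite_empty⟩, fun i hi => hi.1 (hsel1 i)⟩
  obtain ⟨p, hp⟩ := hac ι le t z hne hdir hzb htF
  have hball : Metric.ball p (ε / 2) ∈ nhds p := Metric.ball_mem_nhds p (by linarith)
  obtain ⟨i₁, -, h1⟩ := hp _ hball ⟨(Set.univ, ∅), Filter.univ_mem, Set.finite_empty⟩
  obtain ⟨i₂, hle2, h2⟩ := hp _ hball
    ⟨(Set.univ, {(t i₁, z i₁)}), Filter.univ_mem, Set.finite_singleton _⟩
  have hmem : (t i₁, z i₁) ∈ i₂.1.2 := hle2.2 rfl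
  have hsep : ε ≤ dist (φ (t i₂) (z i₂)) (φ (t i₁) (z i₁)) := hsel3 i₂ _ hmem
  have d1 : dist (φ (t i₁) (z i₁)) p < ε / 2 := h1
  have d2 : dist (φ (t i₂) (z i₂)) p < ε / 2 := h2
  have := dist_triangle (φ (t i₂) (z i₂)) p (φ (t i₁) (z i₁))
  rw [dist_comm (φ (t i₁) (z i₁)) p] at d1
  linarith
end

section
/- If the metric space X is complete and the semigroup action (S,X) is F-limit compact, then (S,X) is F-asymptotically compact. -/
open Filter Set Metric Bornology Topology

universe u v

variable {S : Type u} {X : Type v}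

/-- if `X` is complete, F-limit compactness implies F-asymptotic
compactness. -/
theorem limitCompact_implies_asympCompact
    {S : Type u} {X : Type v} [Semigroup S] [MetricSpace X] [CompleteSpace X]
    (φ : S → X → X) (F : Filter S) [Filter.NeBot F]
    (hact : ∀ (s t : S) (x : X), φ (s * t) x = φ s (φ t x))
    (hcont : ∀ s : S, Continuous (φ s))
    (hlc : FLimitCompact φ F) :
    FAsympCompact φ F := by
  intro ι le t z hne hdir hbd htF
  obtain ⟨hrefl, htrans, hdirected⟩ := hdir
  set u : ι → X := fun i => φ (t i) (z i) with hu
  -- eventuality filter of the net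
  set L : Filter ι := ⨅ i₀, 𝓟 {i | le i₀ i} with hL
  have hmemL : ∀ i₀ : ι, {i | le i₀ i} ∈ L := fun i₀ =>
    mem_iInf_of_mem i₀ (mem_principal_self _)
  haveI : Nonempty ι := hne
  haveI hLne : L.NeBot := by
    refine iInf_neBot_of_directed ?_ ?_
    · intro i j
      obtain ⟨k, hik, hjk⟩ := hdirected i j
      exact ⟨k, principal_mono.2 fun m hm => htrans _ _ _ hik hm,
        principal_mono.2 fun m hm => htrans _ _ _ hjk hm⟩
    · intro i
      exact principal_neBot_iff.2 ⟨i, hrefl i⟩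
  haveI : (Filter.map u L).NeBot := Filter.map_neBot
  set U : Ultrafilter X := Ultrafilter.of (Filter.map u L) with hU
  have hUle : (U : Filter X) ≤ Filter.map u L := Ultrafilter.of_le _
  -- U is Cauchy
  have hcauchy : Cauchy (U : Filter X) := by
    rw [Metric.cauchy_iff]
    refine ⟨U.neBot, fun ε hε => ?_⟩
    obtain ⟨A, hA, T, hTfin, hcov⟩ := hlc (Set.range z) hbd (ε / 3) (by linarith)
    obtain ⟨i₀, hi₀⟩ := htF A hA
    have hmem : (⋃ c ∈ T, Metric.ball c (ε / 3)) ∈ (U : Filter X) := by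
      apply hUle
      rw [Filter.mem_map]
      refine Filter.mem_of_superset (hmemL i₀) ?_
      intro i hi
      exact hcov (Set.mem_image2_of_mem (hi₀ i hi) (Set.mem_range_self i))
    rw [Ultrafilter.mem_coe, Ultrafilter.finite_biUnion_mem_iff hTfin] at hmem
    obtain ⟨c, _, hc⟩ := hmem
    refine ⟨Metric.ball c (ε / 3), hc, fun x hx y hy => ?_⟩
    have := dist_triangle x c y
    rw [Metric.mem_ball] at hx hy
    rw [dist_comm c y] at this
    linarith
  obtain ⟨p, hp⟩ := CompleteSpace.complete hcauchy
  refine ⟨p, fun V hV i₀ => ?_⟩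
  have hV' : V ∈ (U : Filter X) := hp hV
  have hW : u '' {i | le i₀ i} ∈ (U : Filter X) := by
    apply hUle
    rw [Filter.mem_map]
    exact Filter.mem_of_superset (hmemL i₀) (Set.subset_preimage_image u _)
  obtain ⟨x, hxV, i, hi, rfl⟩ := Ultrafilter.nonempty_of_mem (Filter.inter_mem hV' hW)
  exact ⟨i, hi, hxV⟩
end

section
/- Assume the semigroup action (S,X) is F-asymptotically compact and that F satisfies both hypotheses H1 and H4. Then for every nonempty bounded subset Y ⊆ X, the ω-limit set ω(Y,F) is invariant, i.e., s•ω(Y,F) = ω(Y,F) for every s ∈ S. -/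
open Filter Set Metric Bornology Topology

universe u v

variable {S : Type u} {X : Type v}

/-- for an F-asymptotically compact action with F satisfying H₁ and H₄,
ω-limit sets of nonempty bounded sets are invariant. -/
theorem omegaLim_invariant
    {S : Type u} {X : Type v} [Semigroup S] [MetricSpace X]
    (φ : S → X → X) (F : Filter S) [Filter.NeBot F]
    (hact : ∀ (s t : S) (x : X), φ (s * t) x = φ s (φ t x))
    (hcont : ∀ s : S, Continuous (φ s))
    (hac : FAsympCompact φ F) (h1 : HypH1 F) (h4 : HypH4 F)
    (Y : Set X) (hYne : Y.Nonempty) (hYb : Bornology.IsBounded Y) :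
    ∀ s : S, φ s '' omegaLim φ F Y = omegaLim φ F Y := by
  classical
  intro s
  apply Set.Subset.antisymm
  · rintro _ ⟨x, hx, rfl⟩
    simp only [omegaLim, Set.mem_iInter] at hx ⊢
    intro A hA
    obtain ⟨B, hBF, hBA⟩ := h1 s A hA
    have h1' : φ s x ∈ φ s '' closure (Set.image2 φ B Y) := ⟨x, hx B hBF, rfl⟩
    have h2' : φ s '' closure (Set.image2 φ B Y) ⊆ closure (φ s '' Set.image2 φ B Y) :=
      image_closure_subset_closure_image (hcont s)
    refine closure_mono ?_ (h2' h1')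
    rintro _ ⟨_, ⟨b, hb, yy, hyy, rfl⟩, rfl⟩
    exact ⟨s * b, hBA ⟨b, hb, rfl⟩, yy, hyy, hact s b yy⟩
  · intro x hx
    simp only [omegaLim, Set.mem_iInter] at hx
    have key : ∀ A : Set S, A ∈ F → ∀ n : ℕ, ∃ r ∈ A, ∃ yy ∈ Y,
        dist (φ (s * r) yy) x < 1 / (n + 1) := by
      intro A hA n
      obtain ⟨B, hBF, hBsub⟩ := h4 s A hA
      have hx' := hx B hBF
      have hpos : (0:ℝ) < 1 / (n + 1) := by positivity
      obtain ⟨w, hw, hdw⟩ := Metric.mem_closure_iff.mp hx' _ hpos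
      obtain ⟨t, ht, yy, hyy, rfl⟩ := hw
      obtain ⟨rr, hrr, rfl⟩ := hBsub ht
      exact ⟨rr, hrr, yy, hyy, by rwa [dist_comm] at hdw⟩
    choose r hr y hy hd using key
    let ι : Type (max u v) := ULift.{v} {p : Set S × ℕ // p.1 ∈ F}
    let le : ι → ι → Prop := fun i j => j.down.1.1 ⊆ i.down.1.1 ∧ i.down.1.2 ≤ j.down.1.2
    let tn : ι → S := fun i => r i.down.1.1 i.down.2 i.down.1.2
    let zn : ι → X := fun i => y i.down.1.1 i.down.2 i.down.1.2
    have hne : Nonempty ι := ⟨⟨⟨(Set.univ, 0), Filter.univ_mem⟩⟩⟩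
    have hdir : DirectedLE le := by
      refine ⟨fun i => ⟨Set.Subset.rfl, le_rfl⟩,
        fun i j k hij hjk => ⟨hjk.1.trans hij.1, hij.2.trans hjk.2⟩,
        fun i j => ?_⟩
      exact ⟨⟨⟨(i.down.1.1 ∩ j.down.1.1, max i.down.1.2 j.down.1.2),
        Filter.inter_mem i.down.2 j.down.2⟩⟩,
        ⟨Set.inter_subset_left, le_max_left _ _⟩,
        ⟨Set.inter_subset_right, le_max_right _ _⟩⟩
    have htF : NetTendsto le tn F := by
      intro V hV
      exact ⟨⟨⟨(V, 0), hV⟩⟩, fun i hi => hi.1 (hr _ i.down.2 _)⟩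
    have hzb : Bornology.IsBounded (Set.range zn) := by
      refine hYb.subset ?_
      rintro _ ⟨i, rfl⟩
      exact hy _ i.down.2 _
    obtain ⟨p, hp⟩ := hac ι le tn zn hne hdir hzb htF
    have hpmem : p ∈ omegaLim φ F Y := by
      simp only [omegaLim, Set.mem_iInter]
      intro A hA
      rw [mem_closure_iff_nhds]
      intro U hU
      obtain ⟨i, hi, hiU⟩ := hp U hU ⟨⟨(A, 0), hA⟩⟩
      exact ⟨_, hiU, tn i, hi.1 (hr _ i.down.2 _), zn i, hy _ i.down.2 _, rfl⟩
    refine ⟨p, hpmem, ?_⟩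
    apply eq_of_forall_dist_le
    intro ε hε
    obtain ⟨n₀, hn₀⟩ := exists_nat_one_div_lt (half_pos hε)
    have hU : (φ s) ⁻¹' Metric.ball (φ s p) (ε/2) ∈ nhds p :=
      (hcont s).continuousAt.preimage_mem_nhds (Metric.ball_mem_nhds _ (half_pos hε))
    obtain ⟨i, hi, hiU⟩ := hp _ hU ⟨⟨(Set.univ, n₀), Filter.univ_mem⟩⟩
    have h1'' : dist (φ s (φ (tn i) (zn i))) (φ s p) < ε/2 := Metric.mem_ball.mp hiU
    have h2'' : dist (φ (s * tn i) (zn i)) x < 1 / (i.down.1.2 + 1) := hd _ i.down.2 _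
    have h3'' : (1:ℝ) / (i.down.1.2 + 1) ≤ 1 / (n₀ + 1) := by
      apply one_div_le_one_div_of_le (by positivity)
      have : (n₀ : ℝ) ≤ i.down.1.2 := Nat.cast_le.mpr hi.2
      linarith
    calc dist (φ s p) x ≤ dist (φ s p) (φ (s * tn i) (zn i)) + dist (φ (s * tn i) (zn i)) x :=
          dist_triangle _ _ _
      _ ≤ ε/2 + ε/2 := by
          rw [hact, dist_comm]
          exact add_le_add h1''.le (by rw [← hact]; exact ((h2''.trans_le h3'').trans hn₀).le)
      _ = ε := add_halves ε
end

section
/- Assume the semigroup action (S,X) is F-asymptotically compact and that the set {t•c : t ∈ A, c ∈ C} is connected whenever C ⊆ X is connected and A ∈ F. If Y ⊆ X is nonempty and bounded and there exists a connected set C ⊇ Y that is F-attracted by ω(Y,F), then ω(Y,F) is connected. -/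
open Filter Set Metric Bornology Topology

universe u v

variable {S : Type u} {X : Type v}

/-! The ω-limit set is the set of cluster points of the filter `φ (F ×ˢ 𝓟 Y)`, and asymptotic
compactness says exactly that every nontrivial filter finer than it has a cluster point; in a
uniform space this makes the cluster set compact, and nonempty. A compact set `K` which, for every
`δ > 0`, lies in the closure of a connected set contained in its `δ`-thickening is connected, since
a separation of `K` by two disjoint open sets would also separate that connected set. The sets
`A • C`, for `A ∈ F` given by the attraction hypothesis, are such connected sets. -/

open Function
open scoped Uniformity

theorem isCompact_setOfPred_clusterPt_of_forall_le {α : Type*} [UniformSpace α] {L : Filter α}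
    (hL : ∀ 𝓗 : Filter α, 𝓗 ≤ L → 𝓗.NeBot → ∃ p, ClusterPt p 𝓗) :
    IsCompact {p | ClusterPt p L} := by
  intro f hf hfK
  -- An ultrafilter on pairs `(a, b)` that are uniformly close, with `a` along `f` and `b` along `L`:
  -- its second projection clusters, hence converges, and then so does its first.
  have hne : (𝓤 α ⊓ f ×ˢ L).NeBot := by
    refine inf_neBot_iff.2 fun U hU W hW => ?_
    obtain ⟨s, hs, l, hl, hsl⟩ := mem_prod_iff.1 hW
    obtain ⟨a, has, haL⟩ := Filter.nonempty_of_mem (inter_mem hs (le_principal_iff.1 hfK))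
    obtain ⟨b, hab, hbl⟩ := clusterPt_iff_nonempty.1 haL (UniformSpace.ball_mem_nhds a hU) hl
    exact ⟨(a, b), hab, hsl ⟨has, hbl⟩⟩
  set 𝒰 := Ultrafilter.of (𝓤 α ⊓ f ×ˢ L)
  have h𝒰 : ↑𝒰 ≤ 𝓤 α ⊓ f ×ˢ L := Ultrafilter.of_le _
  have hL𝒰 : Tendsto Prod.snd (𝒰 : Filter (α × α)) L :=
    (tendsto_snd (f := f)).mono_left (h𝒰.trans inf_le_right)
  obtain ⟨p, hp⟩ := hL _ hL𝒰 (Ultrafilter.map Prod.snd 𝒰).neBot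
  have hsnd : Tendsto Prod.snd (𝒰 : Filter (α × α)) (𝓝 p) :=
    (Ultrafilter.clusterPt_iff (f := 𝒰.map Prod.snd)).1 hp
  have hfst : Tendsto Prod.fst (𝒰 : Filter (α × α)) (𝓝 p) :=
    hsnd.congr_uniformity (tendsto_swap_uniformity.comp (tendsto_id'.2 (h𝒰.trans inf_le_left)))
  have hf𝒰 : Tendsto Prod.fst (𝒰 : Filter (α × α)) f :=
    (tendsto_fst (g := L)).mono_left (h𝒰.trans inf_le_right)
  exact ⟨p, hp.mono hL𝒰, (ClusterPt.of_le_nhds hfst).mono hf𝒰⟩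

theorem IsCompact.isPreconnected_of_forall_thickening {α : Type*} [MetricSpace α] {K : Set α}
    (hK : IsCompact K)
    (h : ∀ δ > 0, ∃ D, IsPreconnected D ∧ D ⊆ thickening δ K ∧ K ⊆ closure D) :
    IsPreconnected K := by
  rw [isPreconnected_iff_subset_of_fully_disjoint_closed hK.isClosed]
  intro u v hu hv hKuv huv
  obtain ⟨U, V, hUo, hVo, huU, hvV, hUV⟩ := SeparatedNhds.of_isCompact_isCompact
    (hK.inter_right hu) (hK.inter_right hv) (huv.mono inter_subset_right inter_subset_right)
  have hKUV : K ⊆ U ∪ V := fun x hx =>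
    (hKuv hx).imp (fun hxu => huU ⟨hx, hxu⟩) (fun hxv => hvV ⟨hx, hxv⟩)
  obtain ⟨δ, hδ, hδK⟩ := hK.exists_thickening_subset_open (hUo.union hVo) hKUV
  obtain ⟨D, hD, hDK, hKD⟩ := h δ hδ
  rcases hD.subset_or_subset hUo hVo hUV (hDK.trans hδK) with hDU | hDV
  · refine Or.inl fun x hx => (hKuv hx).resolve_right fun hxv => ?_
    exact (hUV.symm.closure_right hVo).le_bot ⟨hvV ⟨hx, hxv⟩, closure_mono hDU (hKD hx)⟩
  · refine Or.inr fun x hx => (hKuv hx).resolve_left fun hxu => ?_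
    exact (hUV.closure_right hUo).le_bot ⟨huU ⟨hx, hxu⟩, closure_mono hDV (hKD hx)⟩

section OmegaLimit

variable [MetricSpace X] {φ : S → X → X} {F : Filter S} {Y : Set X}

theorem omegaLim_subset_closure_image2 {A : Set S} (hA : A ∈ F) :
    omegaLim φ F Y ⊆ closure (image2 φ A Y) :=
  biInter_subset_of_mem hA

theorem omegaLim_eq_setOf_clusterPt :
    omegaLim φ F Y = {p | ClusterPt p (map₂ φ F (𝓟 Y))} := by
  ext p
  simp only [omegaLim, mem_iInter₂, mem_ofPred_eq, clusterPt_iff_forall_mem_closure, mem_map₂_iff]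
  constructor
  · rintro hp s ⟨A, hA, T, hYT, hs⟩
    exact closure_mono ((image2_subset_left hYT).trans hs) (hp A hA)
  · exact fun hp A hA => hp _ ⟨A, hA, Y, mem_principal_self Y, subset_rfl⟩

theorem FAsympCompact.exists_clusterPt_map_uncurry (hac : FAsympCompact φ F)
    (hY : IsBounded Y) {𝒢 : Filter (S × X)} [𝒢.NeBot] (h𝒢 : 𝒢 ≤ F ×ˢ 𝓟 Y) :
    ∃ p, ClusterPt p (map (uncurry φ) 𝒢) := by
  -- the canonical net of `𝒢`: members of `𝒢` ordered by reverse inclusion, a point chosen in each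
  let ι := {W : Set (S × X) // W ∈ 𝒢}
  have hY𝒢 : Prod.snd ⁻¹' Y ∈ 𝒢 := (tendsto_snd.mono_left h𝒢) (mem_principal_self Y)
  have hq : ∀ W : ι, ∃ q ∈ W.1, q.2 ∈ Y := fun W => Filter.nonempty_of_mem (inter_mem W.2 hY𝒢)
  choose q hqW hqY using hq
  let le : ι → ι → Prop := fun W W' => W'.1 ⊆ W.1
  have hdir : DirectedLE le := ⟨fun _ => subset_rfl, fun _ _ _ h₁ h₂ => h₂.trans h₁,
    fun W W' => ⟨⟨W.1 ∩ W'.1, inter_mem W.2 W'.2⟩, inter_subset_left, inter_subset_right⟩⟩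
  have ht : NetTendsto le (fun W => (q W).1) F := fun A hA =>
    ⟨⟨_, (tendsto_fst.mono_left h𝒢) hA⟩, fun W hW => hW (hqW W)⟩
  have hb : IsBounded (range fun W => (q W).2) := hY.subset (range_subset_iff.2 hqY)
  obtain ⟨p, hp⟩ := hac ι le _ _ ⟨⟨univ, univ_mem⟩⟩ hdir hb ht
  refine ⟨p, clusterPt_iff_nonempty.2 fun U hU V hV => ?_⟩
  obtain ⟨W, hW, hWU⟩ := hp U hU ⟨_, hV⟩
  exact ⟨_, hWU, hW (hqW W)⟩

theorem FAsympCompact.exists_clusterPt_of_le_map₂ (hac : FAsympCompact φ F)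
    (hY : IsBounded Y) {𝓗 : Filter X} [𝓗.NeBot] (h𝓗 : 𝓗 ≤ map₂ φ F (𝓟 Y)) :
    ∃ p, ClusterPt p 𝓗 := by
  have hmap : map (uncurry φ) (F ×ˢ 𝓟 Y ⊓ comap (uncurry φ) 𝓗) = 𝓗 := by
    rw [Filter.push_pull, map_uncurry_prod, inf_eq_right.2 h𝓗]
  have : (F ×ˢ 𝓟 Y ⊓ comap (uncurry φ) 𝓗).NeBot := by
    rw [← map_neBot_iff (uncurry φ), hmap]
    infer_instance
  simpa only [hmap] using hac.exists_clusterPt_map_uncurry hY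
    (𝒢 := F ×ˢ 𝓟 Y ⊓ comap (uncurry φ) 𝓗) inf_le_left

theorem isCompact_omegaLim (hac : FAsympCompact φ F) (hY : IsBounded Y) :
    IsCompact (omegaLim φ F Y) := by
  rw [omegaLim_eq_setOf_clusterPt]
  exact isCompact_setOfPred_clusterPt_of_forall_le fun _ h𝓗 _ =>
    hac.exists_clusterPt_of_le_map₂ hY h𝓗

theorem omegaLim_nonempty [F.NeBot] (hac : FAsympCompact φ F) (hYne : Y.Nonempty)
    (hYb : IsBounded Y) : (omegaLim φ F Y).Nonempty := by
  rw [omegaLim_eq_setOf_clusterPt]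
  have := hYne.principal_neBot
  exact hac.exists_clusterPt_of_le_map₂ hYb le_rfl

end OmegaLimit

theorem omegaLim_connected_general
    {S : Type u} {X : Type v} [MetricSpace X]
    (φ : S → X → X) (F : Filter S) [Filter.NeBot F]
    (hac : FAsympCompact φ F)
    (hconn : ∀ C : Set X, ∀ A ∈ F, IsConnected C → IsConnected (Set.image2 φ A C))
    (Y : Set X) (hYne : Y.Nonempty) (hYb : Bornology.IsBounded Y)
    (C : Set X) (hYC : Y ⊆ C) (hC : IsConnected C)
    (hattr : FAttracts φ F (omegaLim φ F Y) C) :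
    IsConnected (omegaLim φ F Y) := by
  have hne := omegaLim_nonempty hac hYne hYb
  refine ⟨hne, (isCompact_omegaLim hac hYb).isPreconnected_of_forall_thickening fun δ hδ => ?_⟩
  obtain ⟨A, hA, hAδ⟩ := hattr δ hδ
  refine ⟨image2 φ A C, (hconn C A hA hC).isPreconnected, ?_, ?_⟩
  · rintro _ ⟨t, ht, c, hc, rfl⟩
    exact (mem_thickening_iff_infDist_lt hne).2 (hAδ t ht c hc)
  · exact (omegaLim_subset_closure_image2 hA).trans (closure_mono (image2_subset_left hYC))

/-- connectedness of ω-limit sets. -/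
theorem omegaLim_connected
    {S : Type u} {X : Type v} [Semigroup S] [MetricSpace X]
    (φ : S → X → X) (F : Filter S) [Filter.NeBot F]
    (hact : ∀ (s t : S) (x : X), φ (s * t) x = φ s (φ t x))
    (hcont : ∀ s : S, Continuous (φ s))
    (hac : FAsympCompact φ F)
    (hconn : ∀ C : Set X, ∀ A ∈ F, IsConnected C → IsConnected (Set.image2 φ A C))
    (Y : Set X) (hYne : Y.Nonempty) (hYb : Bornology.IsBounded Y)
    (C : Set X) (hYC : Y ⊆ C) (hC : IsConnected C)
    (hattr : FAttracts φ F (omegaLim φ F Y) C) :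
    IsConnected (omegaLim φ F Y) :=
  omegaLim_connected_general φ F hac hconn Y hYne hYb C hYC hC hattr
end

section
/- Assume F satisfies hypothesis H4. If the semigroup action (S,X) is both eventually compact and F-eventually bounded, then (S,X) is F-asymptotically compact. -/
open Filter Set Metric Bornology Topology

universe u v

variable {S : Type u} {X : Type v}

/-- under H₄, eventual compactness together with F-eventual boundedness
implies F-asymptotic compactness. -/
theorem eventuallyCompact_eventuallyBounded_implies_asympCompact
    {S : Type u} {X : Type v} [Semigroup S] [MetricSpace X]
    (φ : S → X → X) (F : Filter S) [Filter.NeBot F]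
    (hact : ∀ (s t : S) (x : X), φ (s * t) x = φ s (φ t x))
    (hcont : ∀ s : S, Continuous (φ s))
    (h4 : HypH4 F) (hec : FEventuallyCompact φ) (heb : FEventuallyBounded φ F) :
    FAsympCompact φ F := by
  intro ι le t z hne hdir hbz htF
  obtain ⟨s, hs⟩ := hec
  obtain ⟨A, hAF, hAbd⟩ := heb (Set.range z) hbz
  obtain ⟨B, hBF, hBsub⟩ := h4 s A hAF
  set K := closure (φ s '' Set.image2 φ A (Set.range z)) with hKdef
  have hKc : IsCompact K := hs _ hAbd
  obtain ⟨i₀, hi₀⟩ := htF B hBF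
  let u : ι → X := fun i => φ (t i) (z i)
  let L : Filter X :=
    { sets := {V | ∃ j₀, ∀ i, le j₀ i → u i ∈ V}
      univ_sets := ⟨hne.some, fun _ _ => trivial⟩
      sets_of_superset := fun ⟨j, hj⟩ hVW => ⟨j, fun i hi => hVW (hj i hi)⟩
      inter_sets := fun ⟨j1, h1⟩ ⟨j2, h2⟩ => by
        obtain ⟨k, hk1, hk2⟩ := hdir.2.2 j1 j2
        exact ⟨k, fun i hi => ⟨h1 i (hdir.2.1 _ _ _ hk1 hi), h2 i (hdir.2.1 _ _ _ hk2 hi)⟩⟩ }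
  have hmemL : ∀ V : Set X, V ∈ L ↔ ∃ j₀, ∀ i, le j₀ i → u i ∈ V := fun V => Iff.rfl
  have hLne : L.NeBot := by
    refine Filter.forall_mem_nonempty_iff_neBot.mp ?_
    rintro V ⟨j, hj⟩
    exact ⟨u j, hj j (hdir.1 j)⟩
  have hKL : K ∈ L := by
    refine ⟨i₀, fun i hi => ?_⟩
    have htiB : t i ∈ B := hi₀ i hi
    obtain ⟨a, haA, hae⟩ := hBsub htiB
    have : u i = φ s (φ a (z i)) := by
      simp only [u, ← hae, hact]
    rw [this]
    exact subset_closure ⟨φ a (z i), Set.mem_image2_of_mem haA ⟨i, rfl⟩, rfl⟩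
  have hle : L ≤ Filter.principal K := Filter.le_principal_iff.mpr hKL
  obtain ⟨p, _, hcl⟩ := hKc hle
  refine ⟨p, fun V hV j₀ => ?_⟩
  have hW : u '' {i | le j₀ i} ∈ L := ⟨j₀, fun i hi => Set.mem_image_of_mem u hi⟩
  have hne' : (V ∩ u '' {i | le j₀ i}).Nonempty := by
    have h := hcl.neBot
    exact Filter.nonempty_of_mem (Filter.inter_mem_inf hV hW)
  obtain ⟨x, hxV, i, hi, rfl⟩ := hne'
  exact ⟨i, hi, hxV⟩
end

section
/- For a semigroup action on a topological space X: if K ⊆ X is compact then ω(K,F) ⊆ J(K,F), and if U ⊆ X is open then J(U,F) ⊆ ω(U,F). -/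
open Filter Set Metric Bornology Topology

universe u v

variable {S : Type u} {X : Type v}

/-- The canonical net index of a filter. -/
private def NetIdx {α : Type*} (H : Filter α) : Type _ :=
  {q : α × Set α // q.2 ∈ H ∧ q.1 ∈ q.2}

private def netIdxLE {α : Type*} (H : Filter α) : NetIdx H → NetIdx H → Prop :=
  fun q q' => q'.val.2 ⊆ q.val.2

private lemma netIdx_nonempty {α : Type*} (H : Filter α) [H.NeBot] : Nonempty (NetIdx H) := by
  obtain ⟨p, hp⟩ := Filter.nonempty_of_mem (Filter.univ_mem (f := H))
  exact ⟨⟨(p, Set.univ), Filter.univ_mem, hp⟩⟩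

private lemma netIdx_directed {α : Type*} (H : Filter α) [H.NeBot] :
    DirectedLE (netIdxLE H) := by
  refine ⟨fun i => subset_rfl, fun i j k hij hjk => hjk.trans hij, fun i j => ?_⟩
  have hW : i.val.2 ∩ j.val.2 ∈ H := Filter.inter_mem i.2.1 j.2.1
  obtain ⟨p, hp⟩ := Filter.nonempty_of_mem hW
  exact ⟨⟨(p, i.val.2 ∩ j.val.2), hW, hp⟩, Set.inter_subset_left,
    Set.inter_subset_right⟩

private lemma netTendsto_of_tendsto {α β : Type*} {H : Filter α} [H.NeBot]
    {f : α → β} {L : Filter β} (hf : Filter.Tendsto f H L) :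
    NetTendsto (netIdxLE H) (fun q => f q.val.1) L := by
  intro V hV
  have hV' : f ⁻¹' V ∈ H := hf hV
  obtain ⟨p₀, hp₀⟩ := Filter.nonempty_of_mem hV'
  exact ⟨⟨(p₀, f ⁻¹' V), hV', hp₀⟩, fun q hq => hq q.2.2⟩

/-- for a semigroup action on a topological space, `ω(K,F) ⊆ J(K,F)` for
compact `K`, and `J(U,F) ⊆ ω(U,F)` for open `U`. -/
theorem omega_subset_J_and_J_subset_omega
    {S : Type u} {X : Type v} [Semigroup S] [TopologicalSpace X]
    (φ : S → X → X) (F : Filter S) [Filter.NeBot F]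
    (hact : ∀ (s t : S) (x : X), φ (s * t) x = φ s (φ t x))
    (hcont : ∀ s : S, Continuous (φ s)) :
    (∀ K : Set X, IsCompact K → omegaLim φ F K ⊆ ⋃ x ∈ K, FJSet φ F x) ∧
    (∀ U : Set X, IsOpen U → (⋃ x ∈ U, FJSet φ F x) ⊆ omegaLim φ F U) := by
  constructor
  · -- `ω(K,F) ⊆ J(K,F)` for compact `K`
    intro K hK y hy
    have hy' : ∀ A ∈ F, y ∈ closure (Set.image2 φ A K) := by
      simpa [omegaLim, Set.mem_iInter] using hy
    set ψ : S × X → X := fun p => φ p.1 p.2 with hψ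
    set G : Filter (S × X) :=
      Filter.comap Prod.fst F ⊓ Filter.principal {p | p.2 ∈ K} ⊓
        Filter.comap ψ (nhds y) with hGdef
    have hGne : G.NeBot := by
      refine Filter.forall_mem_nonempty_iff_neBot.mp ?_
      intro s hs
      rw [hGdef, Filter.mem_inf_iff] at hs
      obtain ⟨a, ha, c, hc, rfl⟩ := hs
      rw [Filter.mem_inf_iff] at ha
      obtain ⟨a1, ha1, a2, ha2, rfl⟩ := ha
      obtain ⟨A, hA, hA'⟩ := ha1
      obtain ⟨V, hV, hV'⟩ := hc
      have hcl := hy' A hA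
      rw [mem_closure_iff_nhds] at hcl
      obtain ⟨w, hwV, hw⟩ := hcl V hV
      obtain ⟨t, ht, z, hz, rfl⟩ := hw
      exact ⟨(t, z), ⟨hA' ht, Filter.mem_principal.mp ha2 hz⟩, hV' hwV⟩
    have hsndK : Filter.map Prod.snd G ≤ Filter.principal K := by
      rw [Filter.le_principal_iff, Filter.mem_map]
      exact Filter.mem_inf_of_left (Filter.mem_inf_of_right (Filter.mem_principal.mpr fun p hp => hp))
    obtain ⟨x, hxK, hcl⟩ := hK.exists_clusterPt hsndK
    set H : Filter (S × X) := G ⊓ Filter.comap Prod.snd (nhds x) with hHdef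
    have hHne : H.NeBot := by
      rw [← Filter.map_neBot_iff Prod.snd, hHdef, Filter.push_pull]
      rw [ClusterPt] at hcl
      rwa [inf_comm]
    have htF : Filter.Tendsto Prod.fst H F := by
      rw [Filter.tendsto_iff_comap]
      exact le_trans inf_le_left (le_trans inf_le_left inf_le_left)
    have hzx : Filter.Tendsto Prod.snd H (nhds x) := by
      rw [Filter.tendsto_iff_comap]
      exact inf_le_right
    have hψy : Filter.Tendsto ψ H (nhds y) := by
      rw [Filter.tendsto_iff_comap]
      exact le_trans inf_le_left inf_le_right
    refine Set.mem_iUnion₂.mpr ⟨x, hxK, ?_⟩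
    exact ⟨NetIdx H, netIdxLE H, fun q => q.val.1.1, fun q => q.val.1.2,
      netIdx_nonempty H, netIdx_directed H, netTendsto_of_tendsto htF,
      netTendsto_of_tendsto hzx, netTendsto_of_tendsto hψy⟩
  · -- `J(U,F) ⊆ ω(U,F)` for open `U`
    intro U hU y hy
    simp only [Set.mem_iUnion] at hy
    obtain ⟨x, hxU, ι, le, t, z, hne, hdir, htF, hzx, hty⟩ := hy
    simp only [omegaLim, Set.mem_iInter]
    intro A hA
    rw [mem_closure_iff_nhds]
    intro V hV
    obtain ⟨i1, h1⟩ := htF A hA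
    obtain ⟨i2, h2⟩ := hzx U (hU.mem_nhds hxU)
    obtain ⟨i3, h3⟩ := hty V hV
    obtain ⟨j, hj1, hj2⟩ := hdir.2.2 i1 i2
    obtain ⟨k, hk1, hk2⟩ := hdir.2.2 j i3
    exact ⟨φ (t k) (z k), h3 k hk2,
      Set.mem_image2_of_mem (h1 k (hdir.2.1 _ _ _ hj1 hk1))
        (h2 k (hdir.2.1 _ _ _ hj2 hk1))⟩
end
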